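/- Let f : A → B be a group homomorphism inducing an isomorphism on abelianizations and a surjection on second integral homology. Then f induces an injection A/A_ω → B/B_ω, where A_ω = ∩_{k≥1} A_k is the intersection of all terms of the lower central series. In particular, if A is residually nilpotent (A_ω = 1), then the composition A → B → B/B_ω is injective. -/

import Mathlib

/- Since this Mathlib snapshot does not contain group homology, we set up the standard
concrete (Hopf-formula) model of the second integral homology `H₂(G; ℤ)` of a group `G`,
using the canonical free presentation `FreeGroup G → G`:
`H₂(G; ℤ) ≅ (R ∩ [F,F])/[F,R]` where `F = FreeGroup G` and `R` is the kernel of the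
canonical projection. This model is functorial, giving the induced map `H₂(f)`. -/

/-- The canonical presentation `FreeGroup G → G`. -/
abbrev canonicalPresentation (G : Type*) [Group G] : FreeGroup G →* G :=
  FreeGroup.lift id

/-- The relation subgroup `R` of the canonical presentation. -/
abbrev presKer (G : Type*) [Group G] : Subgroup (FreeGroup G) :=
  (canonicalPresentation G).ker

/-- The numerator `R ∩ [F, F]` of Hopf's formula. -/
abbrev hopfNum (G : Type*) [Group G] : Subgroup (FreeGroup G) :=
  presKer G ⊓ commutator (FreeGroup G)

/-- The denominator `[F, R]` of Hopf's formula. -/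
abbrev hopfDen (G : Type*) [Group G] : Subgroup (FreeGroup G) :=
  ⁅(⊤ : Subgroup (FreeGroup G)), presKer G⁆

/-- The Hopf-formula model of the second integral group homology `H₂(G; ℤ)`:
`(R ∩ [F,F])/[F,R]` for the canonical presentation `F/R` of `G`. -/
abbrev H2Group (G : Type*) [Group G] :=
  ↥(hopfNum G) ⧸ ((hopfDen G).subgroupOf (hopfNum G))

/-- Functoriality of the Hopf model: the map induced on `H₂` by a group homomorphism,
coming from the lift `FreeGroup f : FreeGroup A → FreeGroup B`. -/
noncomputable def H2Map {A B : Type*} [Group A] [Group B] (f : A →* B) :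
    H2Group A →* H2Group B :=
  QuotientGroup.map _ _
    (((FreeGroup.map (f : A → B)).domRestrict (hopfNum A)).codRestrict (hopfNum B)
      (fun x => by
        obtain ⟨hker, hcomm⟩ := x.2
        constructor
        · have : (canonicalPresentation B).comp (FreeGroup.map (f : A → B)) =
              f.comp (canonicalPresentation A) := by
            ext a
            simp [canonicalPresentation]
          have heq := congrArg (fun g => g x.1) this
          simp only [MonoidHom.comp_apply] at heq
          show FreeGroup.map (f : A → B) x.1 ∈ (canonicalPresentation B).ker
          rw [MonoidHom.mem_ker, heq]
          have hker' : canonicalPresentation A x.1 = 1 := hker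
          rw [hker', map_one]
        · have : Subgroup.map (FreeGroup.map (f : A → B)) (commutator (FreeGroup A)) ≤
              commutator (FreeGroup B) := by
            rw [commutator, Subgroup.map_commutator]
            exact Subgroup.commutator_mono le_top le_top
          exact this ⟨x.1, hcomm, rfl⟩))
    (by
      rintro ⟨x, hx⟩ hmem
      simp only [Subgroup.mem_subgroupOf] at hmem ⊢
      have : Subgroup.map (FreeGroup.map (f : A → B)) (hopfDen A) ≤ hopfDen B := by
        rw [hopfDen, Subgroup.map_commutator]
        refine Subgroup.commutator_mono le_top ?_
        rintro y ⟨z, hz, rfl⟩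
        have : (canonicalPresentation B).comp (FreeGroup.map (f : A → B)) =
            f.comp (canonicalPresentation A) := by
          ext a; simp [canonicalPresentation]
        have hz' := congrArg (fun g => g z) this
        simp only [MonoidHom.comp_apply] at hz'
        show FreeGroup.map (f : A → B) z ∈ (canonicalPresentation B).ker
        rw [MonoidHom.mem_ker, hz']
        have hz'' : canonicalPresentation A z = 1 := hz
        rw [hz'', map_one]
      exact this ⟨x, hmem, rfl⟩)

/-- The ω-term of the lower central series, `A_ω = ⋂_k A_k`. -/
abbrev lcsOmega (A : Type*) [Group A] : Subgroup A :=
  ⨅ k : ℕ, (⊤ : Subgroup A).lowerCentralSeries k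

instance (A : Type*) [Group A] : (lcsOmega A).Normal :=
  ⟨fun n hn g => Subgroup.mem_iInf.2 fun k =>
    Subgroup.Normal.conj_mem inferInstance n (Subgroup.mem_iInf.1 hn k) g⟩

/-! Write `A_n` for `(⊤ : Subgroup A).lowerCentralSeries n`, so that `A_0 = A` and
`A_1 = [A, A]`. We show by induction that `f a ∈ B_n` forces `a ∈ A_n`.

Surjectivity on `H₁` propagates to `f(A) · B_n = B` for every `n`: in `B / B_{n+1}` the
image of `B_n` is central, so all commutators there already lie in the image of `A`. In the
inductive step, Hopf's formula for the canonical presentations `F_A → A`, `F_B → B` lets us lift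
`a ∈ A_n` with `f a ∈ B_{n+1}` to `v ∈ [F_A, F_A]` whose image in `F_B` lies in
`[F_B, R_B] · F_B^{(n+1)}` (this is where surjectivity on `H₂` enters). A homomorphism
`σ : F_B → A` inverting `f` modulo `A_n` sends that image into `A_{n+1}`. On generators,
`σ ∘ F(f)` agrees with the projection `F_A → A` modulo `A_n`. So the two agree modulo
`[A_n, A] = A_{n+1}` on `[F_A, F_A]`, and hence `a ∈ A_{n+1}`. -/

open Subgroup
open scoped commutatorElement

namespace Subgroup

variable {G : Type*} [Group G]

theorem map_mk'_le_center_quotient_commutator_top (N : Subgroup G) [N.Normal] :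
    N.map (QuotientGroup.mk' ⁅N, ⊤⁆) ≤ center (G ⧸ ⁅N, (⊤ : Subgroup G)⁆) := by
  rintro _ ⟨n, hn, rfl⟩
  refine mem_center_iff.mpr fun q => QuotientGroup.induction_on q fun g => ?_
  have : QuotientGroup.mk' ⁅N, ⊤⁆ ⁅n, g⁆ = 1 :=
    (QuotientGroup.eq_one_iff _).mpr (commutator_mem_commutator hn (mem_top g))
  rw [map_commutatorElement, commutatorElement_eq_one_iff_commute] at this
  exact this.symm.eq

theorem map_top_lowerCentralSeries_le {K : Type*} [Group K] (p : G →* K) (n : ℕ) :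
    ((⊤ : Subgroup G).lowerCentralSeries n).map p ≤ (⊤ : Subgroup K).lowerCentralSeries n :=
  (map_lowerCentralSeries _ p n).trans_le (lowerCentralSeries_mono n le_top)

theorem map_top_lowerCentralSeries_of_surjective {K : Type*} [Group K] {p : G →* K}
    (hp : Function.Surjective p) (n : ℕ) :
    ((⊤ : Subgroup G).lowerCentralSeries n).map p = (⊤ : Subgroup K).lowerCentralSeries n := by
  rw [map_lowerCentralSeries, map_top_of_surjective p hp]

theorem commutator_le_of_sup_eq_top_of_le_center {H Z : Subgroup G} (hZ : Z ≤ center G)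
    (h : H ⊔ Z = ⊤) : _root_.commutator G ≤ H := by
  have : Z.Normal := ⟨fun z hz g => by rwa [mem_center_iff.mp (hZ hz) g, mul_inv_cancel_right]⟩
  have hcomm : ∀ z ∈ Z, ∀ g, Commute z g := fun z hz g => (mem_center_iff.mp (hZ hz) g).symm
  rw [_root_.commutator_def, commutator_le]
  intro g₁ _ g₂ _
  obtain ⟨h₁, hh₁, z₁, hz₁, rfl⟩ := mem_sup_of_normal_right.mp (h ▸ mem_top g₁ : g₁ ∈ H ⊔ Z)
  obtain ⟨h₂, hh₂, z₂, hz₂, rfl⟩ := mem_sup_of_normal_right.mp (h ▸ mem_top g₂ : g₂ ∈ H ⊔ Z)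
  have : ⁅h₁ * z₁, h₂ * z₂⁆ = ⁅h₁, h₂⁆ := by
    simp [commutatorElement_mul_left_eq_conj_mul, commutatorElement_mul_right_eq_mul_conj,
      (hcomm z₁ hz₁ _).commutator_eq, (hcomm z₂ hz₂ _).symm.commutator_eq]
  rw [this, commutatorElement_def]
  exact H.mul_mem (H.mul_mem (H.mul_mem hh₁ hh₂) (H.inv_mem hh₁)) (H.inv_mem hh₂)

theorem sup_lowerCentralSeries_eq_top {H : Subgroup G} (h : H ⊔ _root_.commutator G = ⊤)
    (n : ℕ) : H ⊔ (⊤ : Subgroup G).lowerCentralSeries n = ⊤ := by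
  induction n with
  | zero => exact sup_top_eq H
  | succ n ih =>
    let mk := QuotientGroup.mk' ((⊤ : Subgroup G).lowerCentralSeries (n + 1))
    have hmk : Function.Surjective mk := QuotientGroup.mk'_surjective _
    have hHZ : H.map mk ⊔ ((⊤ : Subgroup G).lowerCentralSeries n).map mk = ⊤ := by
      rw [← map_sup, ih, map_top_of_surjective _ hmk]
    have hHc : H.map mk ⊔ _root_.commutator _ = ⊤ := by
      rw [← top_lowerCentralSeries_one, ← map_top_lowerCentralSeries_of_surjective hmk, ← map_sup,
        top_lowerCentralSeries_one, h, map_top_of_surjective _ hmk]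
    have hH : H.map mk = ⊤ := top_le_iff.mp <| hHc ▸ sup_le le_rfl
      (commutator_le_of_sup_eq_top_of_le_center (map_mk'_le_center_quotient_commutator_top _) hHZ)
    rw [← QuotientGroup.ker_mk' ((⊤ : Subgroup G).lowerCentralSeries (n + 1)), ← comap_map_eq,
      hH, comap_top]

end Subgroup

namespace FreeGroup

variable {X G : Type*} [Group G]

theorem eq_of_mem_commutator_of_inv_mul_mem_center {α β : FreeGroup X →* G}
    (h : ∀ x, (β (of x))⁻¹ * α (of x) ∈ center G) {w : FreeGroup X}
    (hw : w ∈ commutator (FreeGroup X)) : α w = β w := by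
  let γ : FreeGroup X →* center G := lift fun x => ⟨_, h x⟩
  let βγ : FreeGroup X →* G :=
    { toFun := fun w => β w * γ w
      map_one' := by simp
      map_mul' := fun u v => by
        rw [_root_.map_mul, _root_.map_mul, Subgroup.coe_mul, mul_assoc, mul_assoc,
          ← mul_assoc (β v), mem_center_iff.mp (γ u).2 (β v)]
        simp only [mul_assoc] }
  have hα : α = βγ := ext_hom _ _ fun x => by simp [βγ, γ]
  have hγ : commutator (FreeGroup X) ≤ γ.ker := by
    rw [_root_.commutator_def, commutator_le]
    intro u _ v _
    rw [MonoidHom.mem_ker, map_commutatorElement, commutatorElement_eq_one_iff_commute]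
    exact mul_comm' _ _
  simp [hα, βγ, MonoidHom.mem_ker.mp (hγ hw)]

theorem inv_mul_mem_commutator_of_inv_mul_mem {N : Subgroup G} [N.Normal]
    {α β : FreeGroup X →* G} (h : ∀ x, (β (of x))⁻¹ * α (of x) ∈ N) {w : FreeGroup X}
    (hw : w ∈ commutator (FreeGroup X)) : (β w)⁻¹ * α w ∈ ⁅N, (⊤ : Subgroup G)⁆ := by
  let mk := QuotientGroup.mk' ⁅N, (⊤ : Subgroup G)⁆
  refine QuotientGroup.eq.mp (eq_of_mem_commutator_of_inv_mul_mem_center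
    (α := mk.comp α) (β := mk.comp β) (fun x => ?_) hw).symm
  simpa only [MonoidHom.comp_apply, ← _root_.map_inv, ← _root_.map_mul] using
    N.map_mk'_le_center_quotient_commutator_top (mem_map_of_mem mk (h x))

end FreeGroup

theorem canonicalPresentation_surjective (G : Type*) [Group G] :
    Function.Surjective (canonicalPresentation G) :=
  fun g => ⟨FreeGroup.of g, FreeGroup.lift_apply_of⟩

section Stallings

variable {A B : Type*} [Group A] [Group B] (f : A →* B)

theorem canonicalPresentation_map (w : FreeGroup A) :
    canonicalPresentation B (FreeGroup.map f w) = f (canonicalPresentation A w) :=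
  DFunLike.congr_fun (FreeGroup.ext_hom ((canonicalPresentation B).comp (FreeGroup.map f))
    (f.comp (canonicalPresentation A)) fun a => by simp) w

theorem sup_commutator_eq_top_of_surjective_abelianizationMap
    (h1 : Function.Surjective (Abelianization.map f)) : f.range ⊔ commutator B = ⊤ := by
  refine eq_top_iff.mpr fun b _ => ?_
  obtain ⟨q, hq⟩ := h1 (Abelianization.of b)
  obtain ⟨a, rfl⟩ : ∃ a, Abelianization.of a = q := QuotientGroup.mk_surjective q
  rw [Abelianization.map_of] at hq
  have : (f a)⁻¹ * b ∈ commutator B := QuotientGroup.eq.mp hq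
  simpa using mul_mem_sup (f.mem_range.mpr ⟨a, rfl⟩) this

theorem comap_commutator_le_of_injective_abelianizationMap
    (h1 : Function.Injective (Abelianization.map f)) : (commutator B).comap f ≤ commutator A := by
  intro a ha
  rw [Subgroup.mem_comap, ← Abelianization.ker_of, MonoidHom.mem_ker] at ha
  rw [← Abelianization.ker_of, MonoidHom.mem_ker]
  exact h1 (by rw [Abelianization.map_of, ha, map_one])

theorem exists_inv_map_mul_mem_hopfDen (h2 : Function.Surjective (H2Map f))
    {s : FreeGroup B} (hs : s ∈ hopfNum B) :
    ∃ t ∈ hopfNum A, (FreeGroup.map f t)⁻¹ * s ∈ hopfDen B := by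
  obtain ⟨q, hq⟩ := h2 (QuotientGroup.mk ⟨s, hs⟩)
  obtain ⟨⟨t, ht⟩, rfl⟩ := QuotientGroup.mk_surjective q
  refine ⟨t, ht, ?_⟩
  simpa [H2Map, Subgroup.mem_subgroupOf] using QuotientGroup.eq.mp hq

theorem exists_lift_map_mem_hopfDen_sup (h2 : Function.Surjective (H2Map f)) (k : ℕ) {a : A}
    (ha : a ∈ commutator A) (hfa : f a ∈ (⊤ : Subgroup B).lowerCentralSeries (k + 1)) :
    ∃ v ∈ commutator (FreeGroup A), canonicalPresentation A v = a ∧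
      FreeGroup.map f v ∈ hopfDen B ⊔ (⊤ : Subgroup (FreeGroup B)).lowerCentralSeries (k + 1) := by
  rw [← top_lowerCentralSeries_one,
    ← map_top_lowerCentralSeries_of_surjective (canonicalPresentation_surjective A)] at ha
  obtain ⟨x, hx, rfl⟩ := ha
  rw [← canonicalPresentation_map,
    ← map_top_lowerCentralSeries_of_surjective (canonicalPresentation_surjective B)] at hfa
  obtain ⟨u, hu, hπu⟩ := hfa
  have hs : FreeGroup.map f x * u⁻¹ ∈ hopfNum B := by
    refine mem_inf.mpr ⟨by simp [hπu], mul_mem ?_ (inv_mem ?_)⟩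
    · exact map_top_lowerCentralSeries_le _ 1 (mem_map_of_mem _ hx)
    · exact Subgroup.lowerCentralSeries_antitone _ (Nat.le_add_left 1 k) hu
  obtain ⟨t, ht, htD⟩ := exists_inv_map_mul_mem_hopfDen f h2 hs
  obtain ⟨htR, htc⟩ := mem_inf.mp ht
  refine ⟨t⁻¹ * x, mul_mem (inv_mem htc) hx, by simp [MonoidHom.mem_ker.mp htR], ?_⟩
  simpa [mul_assoc] using mul_mem (mem_sup_left htD) (mem_sup_right hu)

theorem exists_freeGroup_inverse_mod_lowerCentralSeries {k : ℕ}
    (hepi : f.range ⊔ (⊤ : Subgroup B).lowerCentralSeries k = ⊤)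
    (hinj : ((⊤ : Subgroup B).lowerCentralSeries k).comap f ≤
      (⊤ : Subgroup A).lowerCentralSeries k) :
    ∃ σ : FreeGroup B →* A, presKer B ≤ ((⊤ : Subgroup A).lowerCentralSeries k).comap σ ∧
      ∀ a, a⁻¹ * σ (FreeGroup.of (f a)) ∈ (⊤ : Subgroup A).lowerCentralSeries k := by
  have hsec : ∀ b, ∃ a, (f a)⁻¹ * b ∈ (⊤ : Subgroup B).lowerCentralSeries k := fun b => by
    obtain ⟨_, ⟨a, rfl⟩, z, hz, rfl⟩ := mem_sup_of_normal_right.mp (hepi ▸ mem_top b)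
    exact ⟨a, by simpa using hz⟩
  choose g hg using hsec
  let mk := QuotientGroup.mk' ((⊤ : Subgroup B).lowerCentralSeries k)
  have hσ : mk.comp (f.comp (FreeGroup.lift g)) = mk.comp (canonicalPresentation B) :=
    FreeGroup.ext_hom _ _ fun b => QuotientGroup.eq.mpr (by simpa using hg b)
  refine ⟨FreeGroup.lift g, fun r hr => hinj ?_, fun a => hinj ?_⟩
  · have := DFunLike.congr_fun hσ r
    simp only [MonoidHom.comp_apply, MonoidHom.mem_ker.mp hr, map_one] at this
    exact (QuotientGroup.eq_one_iff (f _)).mp this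
  · simpa using inv_mem (hg (f a))

theorem comap_lowerCentralSeries_succ_le (h2 : Function.Surjective (H2Map f)) {k : ℕ}
    (hk : k ≠ 0) (hepi : f.range ⊔ (⊤ : Subgroup B).lowerCentralSeries k = ⊤)
    (hinj : ((⊤ : Subgroup B).lowerCentralSeries k).comap f ≤
      (⊤ : Subgroup A).lowerCentralSeries k) :
    ((⊤ : Subgroup B).lowerCentralSeries (k + 1)).comap f ≤
      (⊤ : Subgroup A).lowerCentralSeries (k + 1) := by
  intro a hfa
  have ha : a ∈ commutator A := Subgroup.lowerCentralSeries_antitone _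
    (Nat.one_le_iff_ne_zero.mpr hk) (hinj (Subgroup.lowerCentralSeries_antitone _ k.le_succ hfa))
  obtain ⟨v, hv, rfl, hφv⟩ := exists_lift_map_mem_hopfDen_sup f h2 k ha hfa
  obtain ⟨σ, hσR, hσφ⟩ := exists_freeGroup_inverse_mod_lowerCentralSeries f hepi hinj
  have hσD : (hopfDen B ⊔ (⊤ : Subgroup (FreeGroup B)).lowerCentralSeries (k + 1)).map σ ≤
      (⊤ : Subgroup A).lowerCentralSeries (k + 1) := by
    rw [Subgroup.map_sup, map_commutator, commutator_comm]
    exact sup_le (commutator_mono (map_le_iff_le_comap.mpr hσR) le_top)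
      (map_top_lowerCentralSeries_le σ (k + 1))
  have hσv := hσD (mem_map_of_mem σ hφv)
  have hcmp := FreeGroup.inv_mul_mem_commutator_of_inv_mul_mem
    (α := σ.comp (FreeGroup.map f)) (β := canonicalPresentation A)
    (N := (⊤ : Subgroup A).lowerCentralSeries k) (fun a => by simpa using hσφ a) hv
  simpa using mul_mem hσv (inv_mem hcmp)

theorem comap_lowerCentralSeries_le (h1 : Function.Bijective (Abelianization.map f))
    (h2 : Function.Surjective (H2Map f)) :
    ∀ n, ((⊤ : Subgroup B).lowerCentralSeries n).comap f ≤ (⊤ : Subgroup A).lowerCentralSeries n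
  | 0 => le_top
  | 1 => comap_commutator_le_of_injective_abelianizationMap f h1.1
  | k + 2 => comap_lowerCentralSeries_succ_le f h2 k.succ_ne_zero
      (sup_lowerCentralSeries_eq_top
        (sup_commutator_eq_top_of_surjective_abelianizationMap f h1.2) (k + 1))
      (comap_lowerCentralSeries_le h1 h2 (k + 1))

theorem comap_lcsOmega_le (h1 : Function.Bijective (Abelianization.map f))
    (h2 : Function.Surjective (H2Map f)) : (lcsOmega B).comap f ≤ lcsOmega A := by
  rw [comap_iInf]
  exact iInf_mono (comap_lowerCentralSeries_le f h1 h2)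

end Stallings

/-- If `f : A → B` induces an isomorphism on abelianizations and a surjection on
second integral homology, then `f` induces an injection `A/A_ω → B/B_ω`, where
`A_ω = ⋂_k A_k`. In particular, if `A` is residually nilpotent (`A_ω = 1`), the
composition `A → B → B/B_ω` is injective. -/
theorem stmt17 {A B : Type*} [Group A] [Group B] (f : A →* B)
    (h1 : Function.Bijective (Abelianization.map f))
    (h2 : Function.Surjective (H2Map f))
    (hle : lcsOmega A ≤ (lcsOmega B).comap f) :
    Function.Injective (QuotientGroup.map (lcsOmega A) (lcsOmega B) f hle) ∧
      (lcsOmega A = ⊥ →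
        Function.Injective ((QuotientGroup.mk' (lcsOmega B)).comp f)) := by
  have hω := comap_lcsOmega_le f h1 h2
  refine ⟨?_, fun hA => ?_⟩
  · rw [← MonoidHom.ker_eq_bot_iff, QuotientGroup.ker_map, Subgroup.map_eq_bot_iff,
      QuotientGroup.ker_mk']
    exact hω
  · rw [← MonoidHom.ker_eq_bot_iff, ← MonoidHom.comap_ker, QuotientGroup.ker_mk', ← le_bot_iff,
      ← hA]
    exact hω
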